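/- Theorem (deterministic consistency bound for the SDP): suppose all entries of K and of K̃ lie in [0,1], let X̂ be SDP-1-feasible with ⟨K, X̂⟩ ≥ ⟨K, X₀⟩, set ε := max_{i,j ∈ I} |K_{ij} − K̃_{ij}|, and suppose γ_min > 2ε. Then ‖X₀ − X̂‖₁ ≤ 8mn / (r·(γ_min − 2ε)). In particular, if m = 0 and γ_min > 2ε, then X̂ = X₀. -/

import Mathlib

open Matrix

/-- The entrywise ℓ¹ norm of a matrix: `‖M‖₁ = Σ_{i,j} |M_{ij}|`. -/
def l1Norm {n : ℕ} (M : Matrix (Fin n) (Fin n) ℝ) : ℝ := ∑ i, ∑ j, |M i j|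

/-- The trace inner product of two matrices: `⟨A, B⟩ = trace(Aᵀ B)`. -/
def mInner {n : ℕ} (A B : Matrix (Fin n) (Fin n) ℝ) : ℝ := Matrix.trace (Aᵀ * B)

/-- A matrix `X ∈ ℝ^{n×n}` is SDP-1-feasible if it is symmetric positive semidefinite,
entrywise nonnegative, has all row sums equal to `n/r`, and has unit diagonal. -/
def SDPFeasible (n r : ℕ) (X : Matrix (Fin n) (Fin n) ℝ) : Prop :=
  X.PosSemidef ∧ (∀ i j, 0 ≤ X i j) ∧ (∀ i, ∑ j, X i j = (n : ℝ) / r) ∧ (∀ i, X i i = 1)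

/-- The population kernel matrix: `K̃_{ij} = f(d_{kℓ}² + σ_k² + σ_ℓ²)` for `i ∈ C̃_k`,
`j ∈ C̃_ℓ`, `i ≠ j`, and `K̃_{ii} = f(0)`, where `d_{kℓ}² = ‖μ_k − μ_ℓ‖²`. -/
noncomputable def popKernel (n r p : ℕ) (z : Fin n → Fin r) (f : ℝ → ℝ)
    (μ : Fin r → Fin p → ℝ) (σ : Fin r → ℝ) : Matrix (Fin n) (Fin n) ℝ :=
  Matrix.of fun i j => if i = j then f 0 else
    f ((∑ t, (μ (z i) t - μ (z j) t) ^ 2) + (σ (z i)) ^ 2 + (σ (z j)) ^ 2)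

/-- `γ_min = min_{k ≠ ℓ} [f(2σ_k²) − f(d_{kℓ}² + σ_k² + σ_ℓ²)]`. -/
noncomputable def gammaMin (r p : ℕ) (f : ℝ → ℝ) (μ : Fin r → Fin p → ℝ)
    (σ : Fin r → ℝ) : ℝ :=
  ⨅ q : {q : Fin r × Fin r // q.1 ≠ q.2},
    (f (2 * (σ q.1.1) ^ 2) -
      f ((∑ t, (μ q.1.1 t - μ q.1.2 t) ^ 2) + (σ q.1.1) ^ 2 + (σ q.1.2) ^ 2))

/-!
Write `D = X₀ - X̂`. Since `X̂` is positive semidefinite with unit diagonal, its entries are at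
most `1`; as it has the same row sums as the cluster indicator `X₀`, every row of `D` has `ℓ¹`
mass twice the off-cluster mass of `X̂` in that row. The population kernel is constant on each
diagonal block and drops by at least `γ_min` off it, so `⟨K̃, D⟩ ≥ γ_min ‖D‖₁ / 2`. On the other
hand `⟨K, D⟩ ≤ 0` by optimality, `|K̃ - K| ≤ ε` on inlier pairs and `≤ 1` elsewhere, and each
outlier row or column of `D` has mass at most `2n/r`; hence `⟨K̃ - K, D⟩ ≤ ε ‖D‖₁ + 4mn/r`.
Together: `(γ_min - 2ε) ‖D‖₁ ≤ 8mn/r`.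
-/

open Finset

lemma Matrix.PosSemidef.two_mul_apply_le_add_diag {ι : Type*} [Fintype ι] [DecidableEq ι]
    {X : Matrix ι ι ℝ} (hX : X.PosSemidef) (i j : ι) : 2 * X i j ≤ X i i + X j j := by
  rcases eq_or_ne i j with rfl | hij
  · linarith
  have hsymm : X j i = X i j := by simpa using hX.isHermitian.apply i j
  have hq := hX.dotProduct_mulVec_nonneg (Pi.single i 1 - Pi.single j 1)
  simp [dotProduct, mulVec, Pi.single_apply, sub_mul, mul_sub, sum_sub_distrib, hsymm] at hq
  linarith

lemma sum_sub_mul_le_of_abs_sub_le {ι : Type*} [Fintype ι] [DecidableEq ι] (I : Finset ι)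
    {A B D : Matrix ι ι ℝ} {ε : ℝ} (hD : D.IsSymm) (hA : ∀ i j, A i j ∈ Set.Icc (0 : ℝ) 1)
    (hB : ∀ i j, B i j ∈ Set.Icc (0 : ℝ) 1) (hε0 : 0 ≤ ε)
    (hε : ∀ i ∈ I, ∀ j ∈ I, |A i j - B i j| ≤ ε) :
    ∑ i, ∑ j, (A i j - B i j) * D i j ≤ ε * ∑ i, ∑ j, |D i j| + 2 * ∑ i ∈ Iᶜ, ∑ j, |D i j| := by
  have hentry : ∀ i j, (A i j - B i j) * D i j
      ≤ ε * |D i j| + ((if i ∈ Iᶜ then |D i j| else 0) + (if j ∈ Iᶜ then |D i j| else 0)) := by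
    intro i j
    have h1 : |A i j - B i j| ≤ 1 :=
      abs_sub_le_of_nonneg_of_le (hA i j).1 (hA i j).2 (hB i j).1 (hB i j).2
    have hAB : |A i j - B i j|
        ≤ ε + ((if i ∈ Iᶜ then 1 else 0) + (if j ∈ Iᶜ then 1 else 0)) := by
      split_ifs with hi hj hj
      · linarith
      · linarith
      · linarith
      · simpa using hε i (by simpa using hi) j (by simpa using hj)
    calc (A i j - B i j) * D i j ≤ |A i j - B i j| * |D i j| :=
          (le_abs_self _).trans_eq (abs_mul _ _)
      _ ≤ (ε + ((if i ∈ Iᶜ then 1 else 0) + (if j ∈ Iᶜ then 1 else 0))) * |D i j| :=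
          mul_le_mul_of_nonneg_right hAB (abs_nonneg _)
      _ = _ := by split_ifs <;> ring
  have hcol : ∑ i, ∑ j ∈ Iᶜ, |D i j| = ∑ i ∈ Iᶜ, ∑ j, |D i j| := by
    rw [sum_comm]
    exact sum_congr rfl fun i _ => sum_congr rfl fun j _ => by rw [hD.apply]
  calc ∑ i, ∑ j, (A i j - B i j) * D i j
      ≤ ∑ i, ∑ j, (ε * |D i j| + ((if i ∈ Iᶜ then |D i j| else 0)
          + (if j ∈ Iᶜ then |D i j| else 0))) :=
        sum_le_sum fun i _ => sum_le_sum fun j _ => hentry i j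
    _ = ε * ∑ i, ∑ j, |D i j| + (∑ i ∈ Iᶜ, ∑ j, |D i j| + ∑ i, ∑ j ∈ Iᶜ, |D i j|) := by
        simp only [sum_add_distrib, mul_sum, sum_ite_irrel, sum_const_zero, sum_ite_mem,
          univ_inter]
    _ = ε * ∑ i, ∑ j, |D i j| + 2 * ∑ i ∈ Iᶜ, ∑ j, |D i j| := by rw [hcol]; ring

section Clustering

variable {ι κ : Type*} [DecidableEq κ] (z : ι → κ)

def clusterMatrix : Matrix ι ι ℝ := of fun i j => if z i = z j then 1 else 0

@[simp]
lemma clusterMatrix_apply (i j : ι) : clusterMatrix z i j = if z i = z j then 1 else 0 := rfl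

lemma clusterMatrix_isSymm : (clusterMatrix z).IsSymm :=
  IsSymm.ext fun i j => by simp [eq_comm]

def membershipMatrix : Matrix ι κ ℝ := of fun i k => if z i = k then 1 else 0

lemma membershipMatrix_mul_transpose [Fintype κ] :
    membershipMatrix z * (membershipMatrix z)ᵀ = clusterMatrix z := by
  ext i j
  simp [membershipMatrix, mul_apply]

lemma sum_clusterMatrix_row [Fintype ι] (i : ι) :
    ∑ j, clusterMatrix z i j = #{j | z j = z i} := by
  rw [card_filter]
  push_cast
  exact sum_congr rfl fun j _ => by simp [eq_comm]

variable [Fintype ι]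

def offClusterSum (X : Matrix ι ι ℝ) (i : ι) : ℝ := ∑ j with z j ≠ z i, X i j

variable {z} {X : Matrix ι ι ℝ} {i : ι}

lemma sum_filter_clusterMatrix_sub_eq_offClusterSum (hrow : ∑ j, X i j = ∑ j, clusterMatrix z i j) :
    ∑ j with z j = z i, (clusterMatrix z i j - X i j) = offClusterSum z X i := by
  have hoff : ∑ j with z j ≠ z i, (clusterMatrix z i j - X i j) = -offClusterSum z X i := by
    rw [offClusterSum, ← sum_neg_distrib]
    refine sum_congr rfl fun j hj => ?_
    simp [Ne.symm (mem_filter.mp hj).2]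
  have htotal : ∑ j, (clusterMatrix z i j - X i j) = 0 := by rw [sum_sub_distrib, hrow, sub_self]
  rw [← sum_filter_add_sum_filter_not univ (fun j => z j = z i), hoff] at htotal
  linarith

lemma sum_abs_clusterMatrix_sub (hrow : ∑ j, X i j = ∑ j, clusterMatrix z i j)
    (hX0 : ∀ j, 0 ≤ X i j) (hX1 : ∀ j, X i j ≤ 1) :
    ∑ j, |clusterMatrix z i j - X i j| = 2 * offClusterSum z X i := by
  have hin : ∑ j with z j = z i, |clusterMatrix z i j - X i j|
      = ∑ j with z j = z i, (clusterMatrix z i j - X i j) :=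
    sum_congr rfl fun j hj => abs_of_nonneg (by simp [(mem_filter.mp hj).2.symm, hX1 j])
  have hout : ∑ j with z j ≠ z i, |clusterMatrix z i j - X i j| = offClusterSum z X i :=
    sum_congr rfl fun j hj => by simp [Ne.symm (mem_filter.mp hj).2, abs_of_nonneg (hX0 j)]
  rw [← sum_filter_add_sum_filter_not univ (fun j => z j = z i), hin, hout,
    sum_filter_clusterMatrix_sub_eq_offClusterSum hrow]
  ring

lemma sum_abs_clusterMatrix_sub_le (hrow : ∑ j, X i j = ∑ j, clusterMatrix z i j)
    (hX0 : ∀ j, 0 ≤ X i j) :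
    ∑ j, |clusterMatrix z i j - X i j| ≤ 2 * ∑ j, clusterMatrix z i j := by
  have hC0 : ∀ j, 0 ≤ clusterMatrix z i j := fun j => by simp only [clusterMatrix_apply]; positivity
  calc ∑ j, |clusterMatrix z i j - X i j| ≤ ∑ j, (clusterMatrix z i j + X i j) :=
        sum_le_sum fun j _ => abs_sub_le_iff.mpr ⟨by linarith [hX0 j], by linarith [hC0 j]⟩
    _ = 2 * ∑ j, clusterMatrix z i j := by rw [sum_add_distrib, hrow]; ring

lemma mul_offClusterSum_le_sum_mul_clusterMatrix_sub (K : Matrix ι ι ℝ) {a γ : ℝ}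
    (hrow : ∑ j, X i j = ∑ j, clusterMatrix z i j) (hdiag : X i i = 1) (hX0 : ∀ j, 0 ≤ X i j)
    (hsame : ∀ j ≠ i, z j = z i → K i j = a) (hgap : ∀ j, z j ≠ z i → γ ≤ a - K i j) :
    γ * offClusterSum z X i ≤ ∑ j, K i j * (clusterMatrix z i j - X i j) := by
  have hin : ∑ j with z j = z i, K i j * (clusterMatrix z i j - X i j)
      = a * offClusterSum z X i := by
    rw [← sum_filter_clusterMatrix_sub_eq_offClusterSum hrow, mul_sum]
    refine sum_congr rfl fun j hj => ?_
    rcases eq_or_ne j i with rfl | hji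
    · simp [hdiag]
    · rw [hsame j hji (mem_filter.mp hj).2]
  have hout : ∑ j with z j ≠ z i, K i j * (clusterMatrix z i j - X i j)
      = -∑ j with z j ≠ z i, K i j * X i j := by
    rw [← sum_neg_distrib]
    exact sum_congr rfl fun j hj => by simp [Ne.symm (mem_filter.mp hj).2]
  calc γ * offClusterSum z X i = ∑ j with z j ≠ z i, γ * X i j := mul_sum _ _ _
    _ ≤ ∑ j with z j ≠ z i, (a - K i j) * X i j :=
        sum_le_sum fun j hj => mul_le_mul_of_nonneg_right (hgap j (mem_filter.mp hj).2) (hX0 j)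
    _ = a * offClusterSum z X i - ∑ j with z j ≠ z i, K i j * X i j := by
        simp only [offClusterSum, mul_sum, sub_mul, sum_sub_distrib]
    _ = ∑ j, K i j * (clusterMatrix z i j - X i j) := by
        rw [← sum_filter_add_sum_filter_not univ (fun j => z j = z i), hin, hout]
        ring

theorem sub_mul_sum_abs_clusterMatrix_sub_le [DecidableEq ι] (I : Finset ι)
    {X K Kt : Matrix ι ι ℝ} {a : ι → ℝ} {s γ ε : ℝ} (hX : X.PosSemidef) (hX0 : ∀ i j, 0 ≤ X i j)
    (hdiag : ∀ i, X i i = 1) (hrowX : ∀ i, ∑ j, X i j = s)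
    (hrowC : ∀ i, ∑ j, clusterMatrix z i j = s)
    (hsame : ∀ i j, j ≠ i → z j = z i → Kt i j = a i)
    (hgap : ∀ i j, z j ≠ z i → γ ≤ a i - Kt i j)
    (hK01 : ∀ i j, K i j ∈ Set.Icc (0 : ℝ) 1) (hKt01 : ∀ i j, Kt i j ∈ Set.Icc (0 : ℝ) 1)
    (hε0 : 0 ≤ ε) (hε : ∀ i ∈ I, ∀ j ∈ I, |Kt i j - K i j| ≤ ε)
    (hopt : ∑ i, ∑ j, K i j * (clusterMatrix z i j - X i j) ≤ 0) :
    (γ - 2 * ε) * ∑ i, ∑ j, |clusterMatrix z i j - X i j| ≤ 8 * #Iᶜ * s := by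
  have hrow : ∀ i, ∑ j, X i j = ∑ j, clusterMatrix z i j := fun i => (hrowX i).trans (hrowC i).symm
  have hX1 : ∀ i j, X i j ≤ 1 := fun i j => by
    linarith [hX.two_mul_apply_le_add_diag i j, hdiag i, hdiag j]
  have hl1 : ∑ i, ∑ j, |clusterMatrix z i j - X i j| = 2 * ∑ i, offClusterSum z X i := by
    rw [mul_sum]
    exact sum_congr rfl fun i _ => sum_abs_clusterMatrix_sub (hrow i) (hX0 i) (hX1 i)
  have hlow : γ * ∑ i, offClusterSum z X i
      ≤ ∑ i, ∑ j, Kt i j * (clusterMatrix z i j - X i j) := by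
    rw [mul_sum]
    exact sum_le_sum fun i _ => mul_offClusterSum_le_sum_mul_clusterMatrix_sub Kt (hrow i)
      (hdiag i) (hX0 i) (hsame i) (hgap i)
  have hpert := sum_sub_mul_le_of_abs_sub_le I
    ((clusterMatrix_isSymm z).sub (isHermitian_iff_isSymm.mp hX.isHermitian)) hKt01 hK01 hε0 hε
  have houtl : ∑ i ∈ Iᶜ, ∑ j, |clusterMatrix z i j - X i j| ≤ #Iᶜ * (2 * s) := by
    rw [← nsmul_eq_mul]
    exact sum_le_card_nsmul _ _ _ fun i _ => hrowC i ▸ sum_abs_clusterMatrix_sub_le (hrow i) (hX0 i)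
  simp only [Matrix.sub_apply, sub_mul, sum_sub_distrib] at hpert
  rw [hl1] at hpert ⊢
  linarith

end Clustering

lemma mInner_eq_sum {n : ℕ} (A B : Matrix (Fin n) (Fin n) ℝ) :
    mInner A B = ∑ i, ∑ j, A i j * B i j := by
  simp only [mInner, trace, Matrix.diag, Matrix.mul_apply, transpose_apply]
  exact sum_comm

lemma mInner_sub_right {n : ℕ} (A B C : Matrix (Fin n) (Fin n) ℝ) :
    mInner A (B - C) = mInner A B - mInner A C := by
  simp [mInner, Matrix.mul_sub, trace_sub]

lemma l1Norm_nonneg {n : ℕ} (M : Matrix (Fin n) (Fin n) ℝ) : 0 ≤ l1Norm M :=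
  sum_nonneg fun _ _ => sum_nonneg fun _ _ => abs_nonneg _

lemma l1Norm_le_zero_iff {n : ℕ} {M : Matrix (Fin n) (Fin n) ℝ} : l1Norm M ≤ 0 ↔ M = 0 := by
  refine ⟨fun h => ?_, by rintro rfl; simp [l1Norm]⟩
  have hrows := (sum_eq_zero_iff_of_nonneg fun i _ => sum_nonneg fun j _ => abs_nonneg (M i j)).mp
    (le_antisymm h (l1Norm_nonneg M))
  ext i j
  simpa using (sum_eq_zero_iff_of_nonneg fun j _ => abs_nonneg (M i j)).mp
    (hrows i (mem_univ i)) j (mem_univ j)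

section PopulationKernel

variable {n r p : ℕ} {z : Fin n → Fin r} {f : ℝ → ℝ} {μ : Fin r → Fin p → ℝ} {σ : Fin r → ℝ}
  {i j : Fin n}

lemma popKernel_apply_of_ne_of_eq (hji : j ≠ i) (hz : z j = z i) :
    popKernel n r p z f μ σ i j = f (2 * σ (z i) ^ 2) := by
  rw [popKernel, of_apply, if_neg hji.symm, hz]
  congr 1
  simp only [sub_self, zero_pow two_ne_zero, sum_const_zero]
  ring

lemma gammaMin_le_sub_popKernel (hz : z j ≠ z i) :
    gammaMin r p f μ σ ≤ f (2 * σ (z i) ^ 2) - popKernel n r p z f μ σ i j := by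
  have hij : i ≠ j := fun h => hz (h ▸ rfl)
  rw [popKernel, of_apply, if_neg hij]
  exact ciInf_le (Set.finite_range _).bddBelow
    (⟨(z i, z j), Ne.symm hz⟩ : {q : Fin r × Fin r // q.1 ≠ q.2})

end PopulationKernel

theorem stmt_7_general (n r p m : ℕ) (hr : 2 ≤ r) (hdvd : r ∣ n)
    (z : Fin n → Fin r)
    (hsize : ∀ k : Fin r, (Finset.univ.filter fun i => z i = k).card = n / r)
    (Z : Matrix (Fin n) (Fin r) ℝ)
    (hZ : Z = Matrix.of (fun i k => if z i = k then (1 : ℝ) else 0))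
    (X₀ : Matrix (Fin n) (Fin n) ℝ) (hX₀ : X₀ = Z * Zᵀ)
    (I : Finset (Fin n)) (hm : Iᶜ.card = m)
    (f : ℝ → ℝ) (μ : Fin r → Fin p → ℝ) (σ : Fin r → ℝ)
    (K : Matrix (Fin n) (Fin n) ℝ)
    (hK01 : ∀ i j, K i j ∈ Set.Icc (0 : ℝ) 1)
    (hKt01 : ∀ i j, popKernel n r p z f μ σ i j ∈ Set.Icc (0 : ℝ) 1)
    (ε : ℝ) (hε0 : 0 ≤ ε)
    (hε : ∀ i ∈ I, ∀ j ∈ I, |K i j - popKernel n r p z f μ σ i j| ≤ ε)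
    (hγε : 2 * ε < gammaMin r p f μ σ)
    (Xh : Matrix (Fin n) (Fin n) ℝ) (hfeas : SDPFeasible n r Xh)
    (hopt : mInner K X₀ ≤ mInner K Xh) :
    l1Norm (X₀ - Xh) ≤ 8 * m * n / (r * (gammaMin r p f μ σ - 2 * ε)) ∧
      (m = 0 → Xh = X₀) := by
  obtain ⟨hpsd, hXh0, hrowXh, hdiag⟩ := hfeas
  obtain rfl : X₀ = clusterMatrix z := hX₀.trans (hZ ▸ membershipMatrix_mul_transpose z)
  set γ := gammaMin r p f μ σ
  set D := clusterMatrix z - Xh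
  have hrowC : ∀ i, ∑ j, clusterMatrix z i j = n / r := fun i => by
    rw [sum_clusterMatrix_row, hsize, Nat.cast_div hdvd (by positivity)]
  have hopt' : ∑ i, ∑ j, K i j * (clusterMatrix z i j - Xh i j) ≤ 0 := by
    have hsub := mInner_sub_right K (clusterMatrix z) Xh
    simp only [mInner_eq_sum, Matrix.sub_apply] at hsub hopt
    linarith
  have hmain : (γ - 2 * ε) * l1Norm D ≤ 8 * m * (n / r) :=
    hm ▸ sub_mul_sum_abs_clusterMatrix_sub_le I hpsd hXh0 hdiag hrowXh hrowC
      (fun _ _ => popKernel_apply_of_ne_of_eq) (fun _ _ => gammaMin_le_sub_popKernel) hK01 hKt01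
      hε0 (fun i hi j hj => abs_sub_comm (K i j) _ ▸ hε i hi j hj) hopt'
  have hbound : l1Norm D ≤ 8 * m * n / (r * (γ - 2 * ε)) := by
    rw [le_div_iff₀ (mul_pos (by positivity) (sub_pos.mpr hγε))]
    calc _ = r * ((γ - 2 * ε) * l1Norm D) := by ring
      _ ≤ r * (8 * m * (n / r)) := by gcongr
      _ = 8 * m * n := by field_simp
  refine ⟨hbound, fun hm0 => ?_⟩
  subst hm0
  exact (sub_eq_zero.mp (l1Norm_le_zero_iff.mp (by simpa using hbound))).symm

/-- deterministic consistency bound for the SDP: if all entries of `K` and of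
`K̃` lie in `[0,1]`, `X̂` is SDP-1-feasible with `⟨K, X̂⟩ ≥ ⟨K, X₀⟩`,
`ε ≥ max_{i,j ∈ I} |K_{ij} − K̃_{ij}|` and `γ_min > 2ε`, then
`‖X₀ − X̂‖₁ ≤ 8mn / (r·(γ_min − 2ε))`; in particular, if `m = 0` then `X̂ = X₀`. -/
theorem stmt_7 (n r p m : ℕ) (hr : 2 ≤ r) (hdvd : r ∣ n)
    (z : Fin n → Fin r)
    (hsize : ∀ k : Fin r, (Finset.univ.filter fun i => z i = k).card = n / r)
    (Z : Matrix (Fin n) (Fin r) ℝ)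
    (hZ : Z = Matrix.of (fun i k => if z i = k then (1 : ℝ) else 0))
    (X₀ : Matrix (Fin n) (Fin n) ℝ) (hX₀ : X₀ = Z * Zᵀ)
    (I : Finset (Fin n)) (hm : Iᶜ.card = m)
    (f : ℝ → ℝ) (μ : Fin r → Fin p → ℝ) (σ : Fin r → ℝ)
    (K : Matrix (Fin n) (Fin n) ℝ) (hK : K.IsSymm)
    (hK01 : ∀ i j, K i j ∈ Set.Icc (0 : ℝ) 1)
    (hKt01 : ∀ i j, popKernel n r p z f μ σ i j ∈ Set.Icc (0 : ℝ) 1)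
    (ε : ℝ) (hε0 : 0 ≤ ε)
    (hε : ∀ i ∈ I, ∀ j ∈ I, |K i j - popKernel n r p z f μ σ i j| ≤ ε)
    (hγε : 2 * ε < gammaMin r p f μ σ)
    (Xh : Matrix (Fin n) (Fin n) ℝ) (hfeas : SDPFeasible n r Xh)
    (hopt : mInner K X₀ ≤ mInner K Xh) :
    l1Norm (X₀ - Xh) ≤ 8 * m * n / (r * (gammaMin r p f μ σ - 2 * ε)) ∧
      (m = 0 → Xh = X₀) :=
  stmt_7_general n r p m hr hdvd z hsize Z hZ X₀ hX₀ I hm f μ σ K hK01 hKt01 ε hε0 hε hγε Xh hfeas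
    hopt
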